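/- If D and E are sized domains, then the set [D → E] of Scott-continuous functions from (D,⊑_D) to (E,⊑_E), with information order and size order defined pointwise and joins, bottom, 0 and 1 given pointwise, is a sized domain. -/

import Mathlib

universe u

/-- `c` is an ω-chain with respect to the order `le`. -/
def IsOmegaChain {D : Type u} (le : D → D → Prop) (c : ℕ → D) : Prop :=
  ∀ n, le (c n) (c (n + 1))

/-- `l` is a least upper bound of the sequence `c` with respect to `le`. -/
def IsLubOf {D : Type u} (le : D → D → Prop) (c : ℕ → D) (l : D) : Prop :=
  (∀ n, le (c n) l) ∧ ∀ u, (∀ n, le (c n) u) → le l u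

/-- A sized domain: a pointed ω-cpo `(D, ⊑, ⊥)` together with a size
preorder `⪯` having binary joins `∨` and least element `0`, such that the
join is Scott-continuous with respect to `⊑`, `x ⊑ y` implies `y ⪯ x`, and
lubs of ω-chains are size-below any common size bound of the chain. -/
structure SizedDomain (D : Type u) where
  ile : D → D → Prop            -- information order ⊑
  sle : D → D → Prop            -- size order ⪯
  join : D → D → D              -- binary size joins ∨
  bot : D                       -- least element ⊥ of ⊑
  szero : D                     -- least element 0 of ⪯
  sone : D                      -- the element 1
  ile_refl : ∀ x, ile x x
  ile_trans : ∀ {x y z}, ile x y → ile y z → ile x z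
  ile_antisymm : ∀ {x y}, ile x y → ile y x → x = y
  bot_ile : ∀ x, ile bot x
  cpo : ∀ c : ℕ → D, IsOmegaChain ile c → ∃ l, IsLubOf ile c l
  sle_refl : ∀ x, sle x x
  sle_trans : ∀ {x y z}, sle x y → sle y z → sle x z
  sle_join_left : ∀ x y, sle x (join x y)
  sle_join_right : ∀ x y, sle y (join x y)
  join_sle : ∀ {x y z}, sle x z → sle y z → sle (join x y) z
  szero_sle : ∀ x, sle szero x
  join_mono : ∀ {x x' y y'}, ile x x' → ile y y' → ile (join x y) (join x' y')
  join_cont_left : ∀ (c : ℕ → D) (l : D), IsOmegaChain ile c → IsLubOf ile c l →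
      ∀ y, IsLubOf ile (fun n => join (c n) y) (join l y)
  join_cont_right : ∀ (c : ℕ → D) (l : D), IsOmegaChain ile c → IsLubOf ile c l →
      ∀ y, IsLubOf ile (fun n => join y (c n)) (join y l)
  ile_sle : ∀ {x y}, ile x y → sle y x
  sle_lub : ∀ (c : ℕ → D) (l : D), IsOmegaChain ile c → IsLubOf ile c l →
      ∀ z, (∀ n, sle z (c n)) → sle z l

/-- A function between (the carriers of) two sized domains is Scott-continuous
if it is monotone for the information orders and preserves lubs of ω-chains. -/
def ScottCont {D E : Type u} (S : SizedDomain D) (T : SizedDomain E) (f : D → E) : Prop :=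
  (∀ x y, S.ile x y → T.ile (f x) (f y)) ∧
  ∀ (c : ℕ → D) (l : D), IsOmegaChain S.ile c → IsLubOf S.ile c l →
    IsLubOf T.ile (fun n => f (c n)) (f l)

/-!
Everything is pointwise. Lubs of ω-chains of continuous functions are computed pointwise, and the
pointwise lub is again continuous because lubs of lubs commute. Conversely, since the pointwise lub
is available in `[D → E]`, every lub in `[D → E]` is pointwise, so Scott continuity of `∨` and the
compatibility of `⪯` with lubs transfer from `E` argument by argument. The only point needing care
is that `x ↦ f x ∨ g x` is continuous: continuity of `∨` in each argument separately gives joint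
continuity along the diagonal of two chains.
-/

theorem IsOmegaChain.rel_of_le {D : Type u} {le : D → D → Prop} (refl : ∀ x, le x x)
    (trans : ∀ {x y z}, le x y → le y z → le x z) {c : ℕ → D} (hc : IsOmegaChain le c)
    {n m : ℕ} (hnm : n ≤ m) : le (c n) (c m) := by
  induction hnm with
  | refl => exact refl _
  | step _ ih => exact trans ih (hc _)

namespace SizedDomain

variable {D E : Type u}

noncomputable def lub (T : SizedDomain E) (c : ℕ → E) (hc : IsOmegaChain T.ile c) : E :=
  Classical.choose (T.cpo c hc)

theorem isLubOf_lub (T : SizedDomain E) (c : ℕ → E) (hc : IsOmegaChain T.ile c) :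
    IsLubOf T.ile c (T.lub c hc) :=
  Classical.choose_spec (T.cpo c hc)

theorem isLubOf_join (T : SizedDomain E) {c d : ℕ → E} {l m : E}
    (hc : IsOmegaChain T.ile c) (hd : IsOmegaChain T.ile d)
    (hl : IsLubOf T.ile c l) (hm : IsLubOf T.ile d m) :
    IsLubOf T.ile (fun n => T.join (c n) (d n)) (T.join l m) := by
  refine ⟨fun n => T.join_mono (hl.1 n) (hm.1 n), fun u hu => ?_⟩
  refine (T.join_cont_left c l hc hl m).2 u fun n => ?_
  refine (T.join_cont_right d m hd hm (c n)).2 u fun k => ?_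
  have hdiag : T.ile (T.join (c n) (d k)) (T.join (c (max n k)) (d (max n k))) :=
    T.join_mono (hc.rel_of_le T.ile_refl T.ile_trans (le_max_left n k))
      (hd.rel_of_le T.ile_refl T.ile_trans (le_max_right n k))
  exact T.ile_trans hdiag (hu (max n k))

end SizedDomain

namespace ScottCont

variable {D E : Type u} {S : SizedDomain D} {T : SizedDomain E}

theorem isOmegaChain_comp {f : D → E} (hf : ScottCont S T f) {c : ℕ → D}
    (hc : IsOmegaChain S.ile c) : IsOmegaChain T.ile (fun n => f (c n)) :=
  fun n => hf.1 _ _ (hc n)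

theorem const (k : E) : ScottCont S T (fun _ => k) :=
  ⟨fun _ _ _ => T.ile_refl k, fun _ _ _ _ => ⟨fun _ => T.ile_refl k, fun _ hu => hu 0⟩⟩

theorem join {f g : D → E} (hf : ScottCont S T f) (hg : ScottCont S T g) :
    ScottCont S T (fun x => T.join (f x) (g x)) :=
  ⟨fun _ _ h => T.join_mono (hf.1 _ _ h) (hg.1 _ _ h), fun _ _ hc hl =>
    T.isLubOf_join (hf.isOmegaChain_comp hc) (hg.isOmegaChain_comp hc)
      (hf.2 _ _ hc hl) (hg.2 _ _ hc hl)⟩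

theorem lub {c : ℕ → D → E} (hc : ∀ x, IsOmegaChain T.ile (fun n => c n x))
    (hcont : ∀ n, ScottCont S T (c n)) :
    ScottCont S T (fun x => T.lub (fun n => c n x) (hc x)) := by
  have hlub x := T.isLubOf_lub (fun n => c n x) (hc x)
  refine ⟨fun x y hxy => (hlub x).2 _ fun n => T.ile_trans ((hcont n).1 x y hxy) ((hlub y).1 n),
    fun d l hd hl => ⟨fun m => ?_, fun u hu => ?_⟩⟩
  · exact (hlub (d m)).2 _ fun n => T.ile_trans ((hcont n).1 _ _ (hl.1 m)) ((hlub l).1 n)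
  · exact (hlub l).2 _ fun n =>
      ((hcont n).2 d l hd hl).2 u fun m => T.ile_trans ((hlub (d m)).1 n) (hu m)

end ScottCont

namespace SizedDomain

variable {D E : Type u} (S : SizedDomain D) (T : SizedDomain E)

abbrev ScottFun : Type u := {f : D → E // ScottCont S T f}

variable {S T}

theorem isLubOf_iff_forall_apply {c : ℕ → ScottFun S T}
    (hc : IsOmegaChain (fun f g : ScottFun S T => ∀ x, T.ile (f.1 x) (g.1 x)) c)
    (l : ScottFun S T) :
    IsLubOf (fun f g : ScottFun S T => ∀ x, T.ile (f.1 x) (g.1 x)) c l ↔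
      ∀ x, IsLubOf T.ile (fun n => (c n).1 x) (l.1 x) := by
  have hlub x := T.isLubOf_lub (fun n => (c n).1 x) (hc · x)
  constructor
  · intro hl x
    let p : ScottFun S T := ⟨_, ScottCont.lub (fun x n => hc n x) fun n => (c n).2⟩
    have hle : T.ile (l.1 x) (p.1 x) := hl.2 p (fun n y => (hlub y).1 n) x
    have hge : T.ile (p.1 x) (l.1 x) := (hlub x).2 _ fun n => hl.1 n x
    rw [T.ile_antisymm hle hge]
    exact hlub x
  · intro hl
    exact ⟨fun n x => (hl x).1 n, fun u hu x => (hl x).2 _ fun n => hu n x⟩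

variable (S T)

noncomputable def scottFun : SizedDomain (ScottFun S T) where
  ile f g := ∀ x, T.ile (f.1 x) (g.1 x)
  sle f g := ∀ x, T.sle (f.1 x) (g.1 x)
  join f g := ⟨fun x => T.join (f.1 x) (g.1 x), f.2.join g.2⟩
  bot := ⟨fun _ => T.bot, ScottCont.const _⟩
  szero := ⟨fun _ => T.szero, ScottCont.const _⟩
  sone := ⟨fun _ => T.sone, ScottCont.const _⟩
  ile_refl f x := T.ile_refl (f.1 x)
  ile_trans h₁ h₂ x := T.ile_trans (h₁ x) (h₂ x)
  ile_antisymm h₁ h₂ := Subtype.ext <| funext fun x => T.ile_antisymm (h₁ x) (h₂ x)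
  bot_ile f x := T.bot_ile (f.1 x)
  cpo c hc := ⟨⟨_, ScottCont.lub (fun x n => hc n x) fun n => (c n).2⟩,
    (isLubOf_iff_forall_apply hc _).2 fun x => T.isLubOf_lub _ (hc · x)⟩
  sle_refl f x := T.sle_refl (f.1 x)
  sle_trans h₁ h₂ x := T.sle_trans (h₁ x) (h₂ x)
  sle_join_left f g x := T.sle_join_left (f.1 x) (g.1 x)
  sle_join_right f g x := T.sle_join_right (f.1 x) (g.1 x)
  join_sle h₁ h₂ x := T.join_sle (h₁ x) (h₂ x)
  szero_sle f x := T.szero_sle (f.1 x)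
  join_mono h₁ h₂ x := T.join_mono (h₁ x) (h₂ x)
  join_cont_left _ l hc hl g :=
    (isLubOf_iff_forall_apply (fun n x => T.join_mono (hc n x) (T.ile_refl (g.1 x))) _).2
      fun x => T.join_cont_left _ _ (hc · x) ((isLubOf_iff_forall_apply hc l).1 hl x) _
  join_cont_right _ l hc hl g :=
    (isLubOf_iff_forall_apply (fun n x => T.join_mono (T.ile_refl (g.1 x)) (hc n x)) _).2
      fun x => T.join_cont_right _ _ (hc · x) ((isLubOf_iff_forall_apply hc l).1 hl x) _
  ile_sle h x := T.ile_sle (h x)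
  sle_lub _ l hc hl z hz x :=
    T.sle_lub _ _ (hc · x) ((isLubOf_iff_forall_apply hc l).1 hl x) (z.1 x) (hz · x)

end SizedDomain

/-- the set `[D → E]` of Scott-continuous functions between two
sized domains, with information and size orders defined pointwise and with
joins, bottom, 0 and 1 given pointwise, is a sized domain. -/
theorem continuous_functions_form_sized_domain {D E : Type u}
    (S : SizedDomain D) (T : SizedDomain E) :
    ∃ F : SizedDomain {f : D → E // ScottCont S T f},
      F.ile = (fun f g => ∀ x, T.ile (f.1 x) (g.1 x)) ∧
      F.sle = (fun f g => ∀ x, T.sle (f.1 x) (g.1 x)) ∧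
      (∀ f g x, (F.join f g).1 x = T.join (f.1 x) (g.1 x)) ∧
      (∀ x, F.bot.1 x = T.bot) ∧
      (∀ x, F.szero.1 x = T.szero) ∧
      (∀ x, F.sone.1 x = T.sone) :=
  ⟨SizedDomain.scottFun S T, rfl, rfl, fun _ _ _ => rfl, fun _ => rfl, fun _ => rfl,
    fun _ => rfl⟩
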